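/- arXiv:1306.5154 — 2 statements merged into one kernel-verified Lean document; each statement's English description precedes it below -/
import Mathlib

section
/- The average eccentricity of the Lucas cube Λ_n, divided by n, converges to (5+√5)/10 as n → ∞. -/
open Finset

/-- Number of positions where two binary strings differ. -/
def diffCount {n : ℕ} (u v : Fin n → Bool) : ℕ :=
  (Finset.univ.filter fun i => u i ≠ v i).card

/-- Fibonacci strings: binary strings with no two consecutive 1's. -/
def FibPred (n : ℕ) (v : Fin n → Bool) : Prop :=
  ∀ i j : Fin n, (j : ℕ) = (i : ℕ) + 1 → ¬(v i = true ∧ v j = true)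

instance (n : ℕ) : DecidablePred (FibPred n) := fun v => by
  unfold FibPred; infer_instance

/-- Vertices of the Fibonacci cube: Fibonacci strings of length n. -/
def FibV (n : ℕ) := {v : Fin n → Bool // FibPred n v}

instance (n : ℕ) : Fintype (FibV n) := Subtype.fintype _
instance (n : ℕ) : DecidableEq (FibV n) := Subtype.instDecidableEq

/-- The Fibonacci cube Γ_n: Fibonacci strings adjacent iff they differ in exactly one position. -/
def fibCube (n : ℕ) : SimpleGraph (FibV n) where
  Adj u v := diffCount u.1 v.1 = 1
  symm := by
    constructor
    intro u v h
    have he : (Finset.univ.filter fun i => v.1 i ≠ u.1 i)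
        = (Finset.univ.filter fun i => u.1 i ≠ v.1 i) := by
      apply Finset.filter_congr; intro i _; exact ne_comm
    simpa [diffCount, he] using h
  loopless := by constructor; intro u h; simp [diffCount] at h

instance (n : ℕ) : DecidableRel (fibCube n).Adj := fun u v => Nat.decEq _ _

/-- Lucas strings: binary strings with no two cyclically consecutive 1's. -/
def LucasPred (n : ℕ) (v : Fin n → Bool) : Prop :=
  ∀ i j : Fin n, (j : ℕ) = ((i : ℕ) + 1) % n → ¬(v i = true ∧ v j = true)

instance (n : ℕ) : DecidablePred (LucasPred n) := fun v => by
  unfold LucasPred; infer_instance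

/-- Vertices of the Lucas cube: Lucas strings of length n. -/
def LucasV (n : ℕ) := {v : Fin n → Bool // LucasPred n v}

instance (n : ℕ) : Fintype (LucasV n) := Subtype.fintype _
instance (n : ℕ) : DecidableEq (LucasV n) := Subtype.instDecidableEq

/-- The Lucas cube Λ_n: Lucas strings adjacent iff they differ in exactly one position. -/
def lucasCube (n : ℕ) : SimpleGraph (LucasV n) where
  Adj u v := diffCount u.1 v.1 = 1
  symm := by
    constructor
    intro u v h
    have he : (Finset.univ.filter fun i => v.1 i ≠ u.1 i)
        = (Finset.univ.filter fun i => u.1 i ≠ v.1 i) := by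
      apply Finset.filter_congr; intro i _; exact ne_comm
    simpa [diffCount, he] using h
  loopless := by constructor; intro u h; simp [diffCount] at h

instance (n : ℕ) : DecidableRel (lucasCube n).Adj := fun u v => Nat.decEq _ _

/-- Eccentricity of a vertex in a finite graph: the maximum distance to any vertex. -/
noncomputable def gecc {V : Type*} [Fintype V] (G : SimpleGraph V) (u : V) : ℕ :=
  Finset.univ.sup (G.dist u)

/-!
Lucas strings are closed under turning `1`s into `0`s, so `Λ_n` is isometric in the hypercube and
its distance is the Hamming distance. For `u ≠ 0`, a farthest Lucas string from `u` is `0` on the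
`1`s of `u` and, on each run of `0`s, is `1` exactly at the positions whose distance to the next
`1` of `u` is odd. Summing over `Λ_n` and using invariance under rotation,
`∑ ecc = n (F_{n+1} - [n odd]) + ecc 0`, while `|Λ_n| = F_{n+1} + F_{n-1} = φⁿ + ψⁿ`. So the
average eccentricity divided by `n` is `F_{n+1} / (φⁿ + ψⁿ) + O(1/n)`, which tends to
`φ / √5 = (5 + √5) / 10`.
-/

section Hamming

variable {ι : Type*} [Fintype ι] [DecidableEq ι] {β : ι → Type*} [∀ i, DecidableEq (β i)]

theorem hammingDist_update_self (x : ∀ i, β i) {i : ι} {b : β i} (h : x i ≠ b) :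
    hammingDist x (Function.update x i b) = 1 := by
  rw [hammingDist, card_eq_one]
  refine ⟨i, ?_⟩
  ext j
  rcases eq_or_ne j i with rfl | hj <;> simp [*]

theorem hammingDist_update_add_one {x y : ∀ i, β i} {i : ι} (h : x i ≠ y i) :
    hammingDist (Function.update x i (y i)) y + 1 = hammingDist x y := by
  have : ({j | Function.update x i (y i) j ≠ y j} : Finset ι) =
      ({j | x j ≠ y j} : Finset ι).erase i := by
    ext j
    rcases eq_or_ne j i with rfl | hj <;> simp [*]
  rw [hammingDist, hammingDist, this, card_erase_add_one (by simpa using h)]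

end Hamming

section Distance

variable {n : ℕ}

theorem LucasPred.mono {u v : Fin n → Bool} (hv : LucasPred n v)
    (huv : ∀ i, u i = true → v i = true) : LucasPred n u :=
  fun i j hij h => hv i j hij ⟨huv i h.1, huv j h.2⟩

-- Flipping a coordinate where `u` and `v` differ, choosing a `1` of `u` if there is one, keeps
-- the string below `u` or below `v`, hence Lucas.
theorem exists_lucasCube_adj_hammingDist_add_one {u v : LucasV n} (huv : u ≠ v) :
    ∃ w : LucasV n, (lucasCube n).Adj u w ∧ hammingDist w.1 v.1 + 1 = hammingDist u.1 v.1 := by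
  suffices ∃ i, u.1 i ≠ v.1 i ∧ LucasPred n (Function.update u.1 i (v.1 i)) by
    obtain ⟨i, hi, hw⟩ := this
    exact ⟨⟨_, hw⟩, hammingDist_update_self u.1 hi, hammingDist_update_add_one hi⟩
  by_cases hdown : ∃ i, u.1 i = true ∧ v.1 i = false
  · obtain ⟨i, hu, hv⟩ := hdown
    refine ⟨i, by simp [hu, hv], u.2.mono fun j hj => ?_⟩
    rcases eq_or_ne j i with rfl | hji
    · simp [hv] at hj
    · rwa [Function.update_of_ne hji] at hj
  · push Not at hdown
    obtain ⟨i, hi⟩ : ∃ i, u.1 i ≠ v.1 i := by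
      by_contra! h
      exact huv (Subtype.ext (funext h))
    refine ⟨i, hi, v.2.mono fun j hj => ?_⟩
    rcases eq_or_ne j i with rfl | hji
    · simpa using hj
    · rw [Function.update_of_ne hji] at hj
      simpa using hdown j hj

theorem exists_lucasCube_walk_length_eq_hammingDist (u v : LucasV n) :
    ∃ p : (lucasCube n).Walk u v, p.length = hammingDist u.1 v.1 := by
  induction hk : hammingDist u.1 v.1 generalizing u with
  | zero =>
    obtain rfl := Subtype.ext (hammingDist_eq_zero.1 hk)
    exact ⟨.nil, rfl⟩
  | succ k ih =>
    obtain ⟨w, huw, hwv⟩ := exists_lucasCube_adj_hammingDist_add_one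
      (u := u) (v := v) (by rintro rfl; simp at hk)
    obtain ⟨p, hp⟩ := ih w (by omega)
    exact ⟨.cons huw p, by simp [hp]⟩

theorem hammingDist_le_length {u v : LucasV n} (p : (lucasCube n).Walk u v) :
    hammingDist u.1 v.1 ≤ p.length := by
  induction p with
  | nil => simp
  | @cons a b c h p ih =>
    rw [SimpleGraph.Walk.length_cons]
    have hab : hammingDist a.1 b.1 = 1 := h
    have := hammingDist_triangle a.1 b.1 c.1
    rw [hab] at this
    omega

theorem lucasCube_dist (u v : LucasV n) : (lucasCube n).dist u v = hammingDist u.1 v.1 := by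
  obtain ⟨p, hp⟩ := exists_lucasCube_walk_length_eq_hammingDist u v
  obtain ⟨q, hq⟩ := p.reachable.exists_walk_length_eq_dist
  exact le_antisymm (hp ▸ SimpleGraph.dist_le p) (hq ▸ hammingDist_le_length q)

theorem gecc_lucasCube (u : LucasV n) :
    gecc (lucasCube n) u = univ.sup fun v : LucasV n => hammingDist u.1 v.1 :=
  sup_congr rfl fun v _ => lucasCube_dist u v

theorem gecc_lucasCube_le (u : LucasV n) : gecc (lucasCube n) u ≤ n := by
  rw [gecc_lucasCube]
  exact Finset.sup_le fun v _ => hammingDist_le_card_fintype.trans_eq (Fintype.card_fin n)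

end Distance

section Farthest

open Fin.NatCast

variable {n : ℕ} [NeZero n] {u : Fin n → Bool}

theorem lucasPred_iff : LucasPred n u ↔ ∀ i : Fin n, ¬(u i = true ∧ u (i + 1) = true) := by
  have hsucc (i : Fin n) : ((i + 1 : Fin n) : ℕ) = (i + 1) % n := by
    rw [Fin.val_add, Fin.val_one', Nat.add_mod_mod]
  refine ⟨fun h i => h i (i + 1) (hsucc i), fun h i j hij => ?_⟩
  obtain rfl : j = i + 1 := Fin.ext (hij.trans (hsucc i).symm)
  exact h i

theorem LucasPred.comp_add_right (hu : LucasPred n u) (j : Fin n) :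
    LucasPred n fun i => u (i + j) := by
  rw [lucasPred_iff] at hu ⊢
  intro i
  rw [add_right_comm]
  exact hu (i + j)

-- Junk value `0` (as `sInf ∅ = 0`) when `u` has no `1`.
noncomputable def nextOneDist (u : Fin n → Bool) (j : Fin n) : ℕ :=
  sInf {t : ℕ | 0 < t ∧ u (j + t) = true}

theorem nextOneDist_spec (hu : ∃ i, u i = true) (j : Fin n) :
    0 < nextOneDist u j ∧ u (j + nextOneDist u j) = true := by
  obtain ⟨i, hi⟩ := hu
  have : ((i - j : Fin n) : ℕ) + n ∈ {t : ℕ | 0 < t ∧ u (j + t) = true} :=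
    ⟨by have := NeZero.pos n; omega, by simpa using hi⟩
  exact Nat.sInf_mem ⟨_, this⟩

theorem nextOneDist_le {j : Fin n} {t : ℕ} (ht : 0 < t) (h : u (j + t) = true) :
    nextOneDist u j ≤ t :=
  Nat.sInf_le ⟨ht, h⟩

theorem nextOneDist_eq_iff {j : Fin n} {t : ℕ} (ht : 0 < t) :
    nextOneDist u j = t ↔ u (j + t) = true ∧ ∀ s, 0 < s → s < t → u (j + s) = false := by
  constructor
  · rintro rfl
    refine ⟨(Nat.sInf_mem (Nat.nonempty_of_pos_sInf ht)).2, fun s hs hst => ?_⟩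
    simpa [hs] using Nat.notMem_of_lt_sInf hst
  · rintro ⟨h, hmin⟩
    have hu : ∃ i, u i = true := ⟨_, h⟩
    refine le_antisymm (nextOneDist_le ht h) (not_lt.1 fun hlt => ?_)
    obtain ⟨hpos, hone⟩ := nextOneDist_spec hu j
    simp [hmin _ hpos hlt] at hone

theorem nextOneDist_eq_one_iff {j : Fin n} : nextOneDist u j = 1 ↔ u (j + 1) = true := by
  rw [nextOneDist_eq_iff one_pos, Nat.cast_one]
  exact ⟨And.left, fun h => ⟨h, fun s hs hs1 => absurd hs1 (by omega)⟩⟩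

theorem nextOneDist_of_succ_false (hu : ∃ i, u i = true) {j : Fin n} (h : u (j + 1) = false) :
    nextOneDist u j = nextOneDist u (j + 1) + 1 := by
  obtain ⟨hpos, hone⟩ := nextOneDist_spec hu (j + 1)
  rw [nextOneDist_eq_iff (Nat.succ_pos _)]
  refine ⟨by convert hone using 2; push_cast; abel, fun s hs hst => ?_⟩
  rcases s with _ | _ | s
  · omega
  · simpa using h
  · have := ((nextOneDist_eq_iff hpos).1 rfl).2 (s + 1) (by omega) (by omega)
    convert this using 2
    push_cast
    abel

theorem nextOneDist_comp_add_right (j k : Fin n) :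
    nextOneDist (fun i => u (i + j)) k = nextOneDist u (k + j) := by
  simp only [nextOneDist, add_right_comm]

theorem odd_nextOneDist_iff (hu : ∃ i, u i = true) (j : Fin n) :
    Odd (nextOneDist u j) ↔ u (j + 1) = true ∨ ¬Odd (nextOneDist u (j + 1)) := by
  cases h : u (j + 1)
  · simp [nextOneDist_of_succ_false hu h, Nat.odd_add_one]
  · simp [nextOneDist_eq_one_iff.2 h]

noncomputable def farthest (u : Fin n → Bool) : Fin n → Bool :=
  fun j => !u j && decide (Odd (nextOneDist u j))

theorem ne_farthest_iff {j : Fin n} :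
    u j ≠ farthest u j ↔ u j = true ∨ Odd (nextOneDist u j) := by
  cases h : u j <;> simp [farthest, h]

theorem farthest_comp_add_right (j k : Fin n) :
    farthest (fun i => u (i + j)) k = farthest u (k + j) := by
  simp only [farthest, nextOneDist_comp_add_right]

theorem lucasPred_farthest (hu : ∃ i, u i = true) : LucasPred n (farthest u) := by
  rw [lucasPred_iff]
  intro j
  simp only [farthest, Bool.and_eq_true, Bool.not_eq_true', decide_eq_true_eq]
  rintro ⟨⟨-, hodd⟩, hsucc, hodd_succ⟩
  rw [odd_nextOneDist_iff hu] at hodd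
  simp [hsucc, hodd_succ] at hodd

-- Each position where `u` and `v` differ is sent injectively to one where `u` and `farthest u`
-- differ: to itself, or else to the next position.
theorem hammingDist_le_hammingDist_farthest (hu : ∃ i, u i = true) {v : Fin n → Bool}
    (hv : LucasPred n v) : hammingDist u v ≤ hammingDist u (farthest u) := by
  rw [lucasPred_iff] at hv
  have hshift {j : Fin n} (hj : u j ≠ v j) (hfar : ¬u j ≠ farthest u j) :
      u (j + 1) = false ∧ v j = true ∧ u (j + 1) ≠ farthest u (j + 1) := by
    obtain ⟨huj, hodd⟩ := not_or.1 (mt ne_farthest_iff.2 hfar)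
    rw [odd_nextOneDist_iff hu, not_or, not_not, Bool.not_eq_true] at hodd
    refine ⟨hodd.1, ?_, ne_farthest_iff.2 (Or.inr hodd.2)⟩
    cases hvj : v j <;> simp_all
  refine card_le_card_of_injOn (fun j => if u j ≠ farthest u j then j else j + 1) ?_ ?_
  · intro j hj
    simp only [coe_filter, mem_univ, true_and, Set.mem_ofPred_eq] at hj ⊢
    split_ifs with hfar
    · exact hfar
    · exact (hshift hj hfar).2.2
  · intro a ha b hb hab
    simp only [coe_filter, mem_univ, true_and, Set.mem_ofPred_eq] at ha hb hab
    split_ifs at hab with hfa hfb hfb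
    · exact hab
    · obtain ⟨hb1, hvb, -⟩ := hshift hb hfb
      subst hab
      exact absurd ⟨hvb, by simpa [hb1] using ha⟩ (hv b)
    · obtain ⟨ha1, hva, -⟩ := hshift ha hfa
      subst hab
      exact absurd ⟨hva, by simpa [ha1] using hb⟩ (hv a)
    · exact add_right_cancel hab

theorem gecc_lucasCube_eq_hammingDist_farthest (u : LucasV n) (hu : ∃ i, u.1 i = true) :
    gecc (lucasCube n) u = hammingDist u.1 (farthest u.1) := by
  rw [gecc_lucasCube]
  refine le_antisymm (Finset.sup_le fun v _ => hammingDist_le_hammingDist_farthest hu v.2) ?_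
  exact le_sup (f := fun v : LucasV n => hammingDist u.1 v.1)
    (mem_univ ⟨_, lucasPred_farthest hu⟩)

end Farthest

section FibonacciStrings

theorem fibPred_succ_iff {m : ℕ} {v : Fin (m + 1) → Bool} :
    FibPred (m + 1) v ↔ ∀ i : Fin m, ¬(v i.castSucc = true ∧ v i.succ = true) := by
  refine ⟨fun h i => h _ _ (by simp), fun h i j hij => ?_⟩
  obtain ⟨k, rfl⟩ : ∃ k : Fin m, i = k.castSucc := ⟨⟨i, by omega⟩, rfl⟩
  obtain rfl : j = k.succ := Fin.ext (by simpa using hij)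
  exact h k

theorem fibPred_cons_false_iff {m : ℕ} {w : Fin m → Bool} :
    FibPred (m + 1) (Fin.cons false w) ↔ FibPred m w := by
  cases m with
  | zero => exact iff_of_true (fun i j h => absurd h (by omega)) (fun i => i.elim0)
  | succ m => simp [fibPred_succ_iff, Fin.forall_fin_succ]

theorem fibPred_cons_true_iff {m : ℕ} {w : Fin (m + 1) → Bool} :
    FibPred (m + 2) (Fin.cons true w) ↔ FibPred (m + 1) w ∧ w 0 = false := by
  simp only [fibPred_succ_iff, Fin.forall_fin_succ, Fin.cons_zero, Fin.cons_succ,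
    Fin.castSucc_zero, ← Fin.succ_castSucc, true_and, Bool.not_eq_true, and_comm]

def zeroPrefixFib (n t : ℕ) : Finset (Fin n → Bool) :=
  {v | FibPred n v ∧ ∀ i : Fin n, (i : ℕ) < t → v i = false}

theorem card_zeroPrefixFib_succ_succ (m t : ℕ) :
    #(zeroPrefixFib (m + 1) (t + 1)) = #(zeroPrefixFib m t) := by
  have hhead {v : Fin (m + 1) → Bool} (hv : v ∈ zeroPrefixFib (m + 1) (t + 1)) : v 0 = false :=
    (mem_filter.1 hv).2.2 0 (Nat.succ_pos t)
  refine card_nbij' Fin.tail (fun w => Fin.cons false w) (fun v hv => ?_) (fun w hw => ?_)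
    (fun v hv => ?_) (fun w _ => Fin.tail_cons _ _)
  · have hv' := hhead hv
    simp only [zeroPrefixFib, coe_filter, Set.mem_ofPred_eq, mem_univ, true_and] at hv ⊢
    rw [← Fin.cons_self_tail v, hv', fibPred_cons_false_iff] at hv
    exact ⟨hv.1, fun i hi => by simpa using hv.2 i.succ (by simpa using hi)⟩
  · simp only [zeroPrefixFib, coe_filter, Set.mem_ofPred_eq, mem_univ, true_and,
      fibPred_cons_false_iff] at hw ⊢
    refine ⟨hw.1, Fin.cases (fun _ => rfl) fun i hi => ?_⟩
    simpa using hw.2 i (by simpa using hi)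
  · conv_rhs => rw [← Fin.cons_self_tail v, hhead hv]

theorem card_zeroPrefixFib_filter_head_true (m : ℕ) :
    #{v ∈ zeroPrefixFib (m + 2) 0 | v 0 = true} = #(zeroPrefixFib (m + 1) 1) := by
  refine card_nbij' Fin.tail (fun w => Fin.cons true w) (fun v hv => ?_) (fun w hw => ?_)
    (fun v hv => ?_) (fun w _ => Fin.tail_cons _ _)
  · simp only [zeroPrefixFib, coe_filter, Set.mem_ofPred_eq, mem_filter, mem_univ,
      true_and] at hv ⊢
    obtain ⟨⟨hfib, -⟩, h0⟩ := hv
    rw [← Fin.cons_self_tail v, h0, fibPred_cons_true_iff] at hfib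
    refine ⟨hfib.1, fun i hi => ?_⟩
    obtain rfl : i = 0 := Fin.ext (by simp only [Fin.val_zero]; omega)
    exact hfib.2
  · simp only [zeroPrefixFib, coe_filter, Set.mem_ofPred_eq, mem_filter, mem_univ,
      true_and] at hw ⊢
    exact ⟨⟨fibPred_cons_true_iff.2 ⟨hw.1, hw.2 0 (by simp)⟩, by simp⟩, rfl⟩
  · simp only [coe_filter, Set.mem_ofPred_eq] at hv
    conv_rhs => rw [← Fin.cons_self_tail v, hv.2]

theorem card_zeroPrefixFib_zero_add_two (m : ℕ) :
    #(zeroPrefixFib (m + 2) 0) = #(zeroPrefixFib (m + 1) 0) + #(zeroPrefixFib m 0) := by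
  rw [← card_filter_add_card_filter_not (p := fun v => v 0 = false)]
  simp only [Bool.not_eq_false]
  rw [card_zeroPrefixFib_filter_head_true, card_zeroPrefixFib_succ_succ,
    ← card_zeroPrefixFib_succ_succ (m + 1)]
  congr 2
  ext v
  simp only [zeroPrefixFib, mem_filter, mem_univ, true_and, Nat.not_lt_zero, IsEmpty.forall_iff,
    implies_true, and_true]
  refine and_congr_right fun _ => ⟨fun h i hi => ?_, fun h => h 0 (by simp)⟩
  obtain rfl : i = 0 := Fin.ext (by simp only [Fin.val_zero]; omega)
  exact h

theorem card_zeroPrefixFib {m t : ℕ} (h : t ≤ m) :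
    #(zeroPrefixFib m t) = Nat.fib (m - t + 2) := by
  induction t generalizing m with
  | zero =>
    induction m using Nat.twoStepInduction with
    | zero => decide
    | one => decide
    | more m ih₁ ih₂ =>
      rw [card_zeroPrefixFib_zero_add_two, ih₁ (by omega), ih₂ (by omega)]
      simp only [Nat.sub_zero]
      rw [Nat.fib_add_two (n := m + 2)]
      ring_nf
  | succ t ih =>
    obtain ⟨m, rfl⟩ : ∃ m', m = m' + 1 := ⟨m - 1, by omega⟩
    rw [card_zeroPrefixFib_succ_succ, ih (by omega), Nat.add_sub_add_right]

theorem card_zeroPrefixFib_filter_true {m t : ℕ} (ht : t < m) :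
    #{v ∈ zeroPrefixFib m t | v ⟨t, ht⟩ = true} = Nat.fib (m - t) := by
  have hsplit :=
    card_filter_add_card_filter_not (s := zeroPrefixFib m t) (p := fun v => v ⟨t, ht⟩ = true)
  have hnext : {v ∈ zeroPrefixFib m t | ¬v ⟨t, ht⟩ = true} = zeroPrefixFib m (t + 1) := by
    ext v
    simp only [zeroPrefixFib, mem_filter, mem_univ, true_and, Bool.not_eq_true, and_assoc]
    refine and_congr_right fun _ =>
      ⟨fun ⟨hlt, ht'⟩ i hi => ?_, fun h => ⟨fun i hi => h i (by omega), h _ (by simp)⟩⟩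
    rcases Nat.lt_succ_iff_lt_or_eq.1 hi with hi | hi
    · exact hlt i hi
    · rwa [show i = ⟨t, ht⟩ from Fin.ext hi]
  rw [hnext, card_zeroPrefixFib ht.le, card_zeroPrefixFib ht,
    show m - (t + 1) + 2 = m - t + 1 by omega, Nat.fib_add_two] at hsplit
  omega

end FibonacciStrings

theorem sum_fib_sub_odd_add_mod_two (n : ℕ) :
    ∑ t ∈ range n with Odd t, Nat.fib (n - t) + n % 2 = Nat.fib n := by
  induction n using Nat.twoStepInduction with
  | zero => simp
  | one => simp
  | more n ih _ =>
    rw [sum_filter] at ih ⊢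
    rw [sum_range_succ', sum_range_succ']
    simp only [Nat.odd_add_one, not_not, Nat.add_sub_add_right, Nat.not_odd_zero, odd_one,
      if_true, if_false, Nat.add_mod_right, Nat.fib_add_two, Nat.sub_zero, zero_add,
      show n + 2 - 1 = n + 1 by omega]
    omega

section LucasCounts

open Fin.NatCast

variable {n : ℕ}

theorem card_lucasV_filter (p : (Fin n → Bool) → Prop) [DecidablePred p] :
    #{u : LucasV n | p u.1} = #{v | LucasPred n v ∧ p v} := by
  refine card_bij (fun u _ => u.1) (fun u hu => ?_) (fun _ _ _ _ => Subtype.ext) (fun v hv => ?_)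
  · simpa [u.2] using hu
  · simp only [mem_filter, mem_univ, true_and] at hv
    exact ⟨⟨v, hv.1⟩, mem_filter.2 ⟨mem_univ _, hv.2⟩, rfl⟩

variable [NeZero n]

theorem lucasPred_iff_fibPred_of_head_false {v : Fin n → Bool} (h : v 0 = false) :
    LucasPred n v ↔ FibPred n v := by
  refine ⟨fun hv i j hij => hv i j (by rw [Nat.mod_eq_of_lt (hij ▸ j.2)]; exact hij),
    fun hv i j hij => ?_⟩
  rcases (Nat.succ_le_of_lt i.2).lt_or_eq with hlt | heq
  · exact hv i j (by rwa [Nat.mod_eq_of_lt hlt] at hij)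
  · obtain rfl : j = 0 :=
      Fin.ext (by rw [hij, show (i : ℕ) + 1 = n from heq, Nat.mod_self]; rfl)
    simp [h]

def lucasRotate (j : Fin n) : LucasV n ≃ LucasV n where
  toFun u := ⟨fun i => u.1 (i + j), u.2.comp_add_right j⟩
  invFun u := ⟨fun i => u.1 (i + -j), u.2.comp_add_right (-j)⟩
  left_inv u := Subtype.ext (funext fun i => by simp)
  right_inv u := Subtype.ext (funext fun i => by simp)

theorem lucasRotate_val (j : Fin n) (u : LucasV n) :
    (lucasRotate j u).1 = fun i => u.1 (i + j) :=
  rfl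

theorem nextOneDist_lt {u : Fin n → Bool} {j : Fin n} (h : u j = false) :
    nextOneDist u j < n := by
  by_cases hu : ∃ i, u i = true
  · obtain ⟨i, hi⟩ : ∃ i, i = j + (nextOneDist u j : Fin n) := ⟨_, rfl⟩
    have hone : u i = true := hi ▸ (nextOneDist_spec hu j).2
    have hij : i - j ≠ 0 := sub_ne_zero.2 fun he => by simp [he, h] at hone
    have hpos : 0 < ((i - j : Fin n) : ℕ) := Nat.pos_of_ne_zero fun h0 => hij (Fin.ext h0)
    exact (nextOneDist_le hpos (by simpa using hone)).trans_lt (Fin.is_lt _)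
  · push Not at hu
    simp [nextOneDist, hu, NeZero.pos n]

theorem card_lucasV_head_false : #{u : LucasV n | u.1 0 = false} = Nat.fib (n + 1) := by
  have : ({v | LucasPred n v ∧ v 0 = false} : Finset _) = zeroPrefixFib n 1 := by
    ext v
    simp only [zeroPrefixFib, mem_filter, mem_univ, true_and]
    have hhead : (∀ i : Fin n, (i : ℕ) < 1 → v i = false) ↔ v 0 = false :=
      ⟨fun h => h 0 (by simp), fun h i hi => by
        rwa [show i = 0 from Fin.ext (by rw [Fin.val_zero]; omega)]⟩
    rw [hhead, and_congr_left_iff]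
    exact lucasPred_iff_fibPred_of_head_false
  rw [card_lucasV_filter (· 0 = false), this, card_zeroPrefixFib NeZero.one_le]
  congr 1
  have := NeZero.pos n
  omega

theorem card_lucasV_head_false_nextOneDist_eq {t : ℕ} (ht0 : 0 < t) (ht : t < n) :
    #{u : LucasV n | u.1 0 = false ∧ nextOneDist u.1 0 = t} = Nat.fib (n - t) := by
  have hcast (s : ℕ) (hs : s < n) : ((0 : Fin n) + (s : Fin n)) = ⟨s, hs⟩ :=
    Fin.ext (by simp [Nat.mod_eq_of_lt hs])
  have : ({v | LucasPred n v ∧ v 0 = false ∧ nextOneDist v 0 = t} : Finset _) =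
      {v ∈ zeroPrefixFib n t | v ⟨t, ht⟩ = true} := by
    ext v
    simp only [zeroPrefixFib, mem_filter, mem_univ, true_and, nextOneDist_eq_iff ht0, hcast t ht]
    constructor
    · rintro ⟨hv, h0, hone, hzero⟩
      refine ⟨⟨(lucasPred_iff_fibPred_of_head_false h0).1 hv, fun i hi => ?_⟩, hone⟩
      rcases Nat.eq_zero_or_pos i with hi0 | hi0
      · rwa [show i = 0 from Fin.ext (by rw [Fin.val_zero]; exact hi0)]
      · simpa [hcast i i.2] using hzero i hi0 hi
    · rintro ⟨⟨hv, hzero⟩, hone⟩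
      have h0 : v 0 = false := hzero 0 (by simpa using ht0)
      refine ⟨(lucasPred_iff_fibPred_of_head_false h0).2 hv, h0, hone, fun s _ hs => ?_⟩
      rw [hcast s (hs.trans ht)]
      exact hzero _ hs
  rw [card_lucasV_filter (fun v => v 0 = false ∧ nextOneDist v 0 = t), this,
    card_zeroPrefixFib_filter_true]

theorem card_lucasV_head_true (hn : 2 ≤ n) :
    #{u : LucasV n | u.1 0 = true} = Nat.fib (n - 1) := by
  calc #{u : LucasV n | u.1 0 = true}
      = #{u : LucasV n | u.1 1 = true} :=
        (card_equiv (lucasRotate 1) fun u => by simp [lucasRotate_val]).symm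
    _ = #{u : LucasV n | u.1 0 = false ∧ nextOneDist u.1 0 = 1} := by
        refine congrArg card (filter_congr fun u _ => ?_)
        rw [nextOneDist_eq_one_iff, zero_add]
        have := (lucasPred_iff.1 u.2) 0
        rw [zero_add] at this
        cases h : u.1 0 <;> simp_all
    _ = Nat.fib (n - 1) := card_lucasV_head_false_nextOneDist_eq one_pos (by omega)

theorem card_lucasV (hn : 2 ≤ n) :
    Fintype.card (LucasV n) = Nat.fib (n + 1) + Nat.fib (n - 1) := by
  rw [← card_univ, ← card_filter_add_card_filter_not (p := fun u : LucasV n => u.1 0 = false)]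
  simp only [Bool.not_eq_false, card_lucasV_head_false, card_lucasV_head_true hn]

theorem card_lucasV_head_false_odd_nextOneDist_add :
    #{u : LucasV n | u.1 0 = false ∧ Odd (nextOneDist u.1 0)} + n % 2 = Nat.fib n := by
  rw [card_eq_sum_card_fiberwise (f := fun u => nextOneDist u.1 0) (t := {t ∈ range n | Odd t})]
  · rw [← sum_fib_sub_odd_add_mod_two n]
    congr 1
    refine sum_congr rfl fun t ht => ?_
    simp only [mem_filter, mem_range] at ht
    rw [filter_filter, ← card_lucasV_head_false_nextOneDist_eq ht.2.pos ht.1]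
    refine congrArg card (filter_congr fun u _ => ?_)
    constructor
    · rintro ⟨⟨h0, -⟩, hd⟩
      exact ⟨h0, hd⟩
    · rintro ⟨h0, hd⟩
      exact ⟨⟨h0, hd ▸ ht.2⟩, hd⟩
  · intro u hu
    simp only [coe_filter, mem_univ, true_and, mem_range] at hu ⊢
    exact ⟨nextOneDist_lt hu.1, hu.2⟩

theorem card_lucasV_ne_farthest_head_add (hn : 2 ≤ n) :
    #{u : LucasV n | u.1 0 ≠ farthest u.1 0} + n % 2 = Nat.fib (n + 1) := by
  have hsplit : #{u : LucasV n | u.1 0 ≠ farthest u.1 0} = #{u : LucasV n | u.1 0 = true} +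
      #{u : LucasV n | u.1 0 = false ∧ Odd (nextOneDist u.1 0)} := by
    rw [← card_union_of_disjoint, ← filter_or]
    · exact congrArg card (filter_congr fun u _ => by rw [ne_farthest_iff]; cases u.1 0 <;> simp)
    · exact disjoint_filter.2 fun u _ h1 h2 => by simp [h1] at h2
  rw [hsplit, add_assoc, card_lucasV_head_false_odd_nextOneDist_add, card_lucasV_head_true hn,
    Nat.fib_add_one (by omega)]

end LucasCounts

section EccentricitySum

open Fin.NatCast

variable {n : ℕ} [NeZero n]

def lucasZero (n : ℕ) : LucasV n := ⟨fun _ => false, fun _ _ _ h => by simp at h⟩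

theorem farthest_lucasZero : farthest (lucasZero n).1 = (lucasZero n).1 := by
  funext j
  simp [farthest, lucasZero, nextOneDist]

theorem sum_hammingDist_farthest :
    ∑ u : LucasV n, hammingDist u.1 (farthest u.1) =
      n * #{u : LucasV n | u.1 0 ≠ farthest u.1 0} := by
  simp only [hammingDist, card_filter]
  rw [sum_comm]
  have hrot (j : Fin n) : ∑ u : LucasV n, (if u.1 j ≠ farthest u.1 j then 1 else 0) =
      ∑ u : LucasV n, (if u.1 0 ≠ farthest u.1 0 then 1 else 0) := by
    rw [← Equiv.sum_comp (lucasRotate j) fun u => if u.1 0 ≠ farthest u.1 0 then 1 else 0]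
    simp only [lucasRotate_val, farthest_comp_add_right, zero_add]
  rw [sum_congr rfl fun j _ => hrot j, sum_const, card_univ, Fintype.card_fin, smul_eq_mul]

theorem sum_gecc_lucasCube :
    ∑ u : LucasV n, gecc (lucasCube n) u =
      n * #{u : LucasV n | u.1 0 ≠ farthest u.1 0} + gecc (lucasCube n) (lucasZero n) := by
  rw [← sum_hammingDist_farthest, ← sum_erase_add _ _ (mem_univ (lucasZero n)),
    ← sum_erase_add _ _ (mem_univ (lucasZero n)), farthest_lucasZero, hammingDist_self, add_zero]
  refine congrArg (· + _) (sum_congr rfl fun u hu => gecc_lucasCube_eq_hammingDist_farthest u ?_)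
  by_contra! h
  exact ne_of_mem_erase hu (Subtype.ext (funext fun i => by simpa [lucasZero] using h i))

theorem abs_sum_gecc_lucasCube_sub_le (hn : 2 ≤ n) :
    |((∑ u : LucasV n, gecc (lucasCube n) u : ℕ) : ℝ) - n * Nat.fib (n + 1)| ≤ n := by
  have hsum : ∑ u : LucasV n, gecc (lucasCube n) u + n * (n % 2) =
      n * Nat.fib (n + 1) + gecc (lucasCube n) (lucasZero n) := by
    rw [sum_gecc_lucasCube, ← card_lucasV_ne_farthest_head_add hn]
    ring
  have hzero := gecc_lucasCube_le (lucasZero n)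
  have hpar : n % 2 ≤ 1 := Nat.le_of_lt_succ (Nat.mod_lt n two_pos)
  generalize ∑ u : LucasV n, gecc (lucasCube n) u = S at hsum ⊢
  generalize gecc (lucasCube n) (lucasZero n) = e at hsum hzero
  generalize n % 2 = p at hsum hpar
  rw [abs_le]
  constructor
  · have : n * Nat.fib (n + 1) ≤ S + n := by nlinarith
    simp only [neg_le_sub_iff_le_add]
    exact_mod_cast this
  · have : S ≤ n * Nat.fib (n + 1) + n := by nlinarith
    simp only [sub_le_iff_le_add']
    exact_mod_cast this

end EccentricitySum

section Asymptotics

open Real goldenRatio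

theorem abs_div_div_sub_le {S F L x m : ℝ} (hm : 0 < m) (hmL : m ≤ L) (hS : |S - m * F| ≤ m)
    (hF : |F - x * L| ≤ 1) : |S / L / m - x| ≤ 2 / m := by
  have hL : 0 < L := hm.trans_le hmL
  have hnum : |(S - m * F) + m * (F - x * L)| ≤ 2 * m :=
    calc _ ≤ |S - m * F| + |m * (F - x * L)| := abs_add_le _ _
      _ ≤ m + m * 1 := by rw [abs_mul, abs_of_pos hm]; gcongr
      _ = 2 * m := by ring
  rw [show S / L / m - x = ((S - m * F) + m * (F - x * L)) / (L * m) by field_simp; ring, abs_div,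
    abs_of_pos (mul_pos hL hm), div_le_div_iff₀ (mul_pos hL hm) hm]
  nlinarith [mul_le_mul hnum hmL hm.le (by positivity)]

theorem fib_add_one_add_fib_sub_one {n : ℕ} (hn : n ≠ 0) :
    (Nat.fib (n + 1) + Nat.fib (n - 1) : ℝ) = φ ^ n + ψ ^ n := by
  obtain ⟨m, rfl⟩ := Nat.exists_eq_succ_of_ne_zero hn
  have h := Nat.fib_add_two (n := m)
  have hφ := goldenRatio_mul_fib_succ_add_fib m
  have hψ := goldenConj_mul_fib_succ_add_fib m
  simp only [Nat.succ_eq_add_one, Nat.add_sub_cancel, h, Nat.cast_add]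
  linear_combination hφ + hψ - (Nat.fib (m + 1) : ℝ) * goldenRatio_add_goldenConj

theorem fib_add_one_sub_goldenRatio_div_sqrt_five_mul (n : ℕ) :
    (Nat.fib (n + 1) : ℝ) - φ / √5 * (φ ^ n + ψ ^ n) = -(ψ ^ n / √5) := by
  have h5 : √5 ≠ 0 := by positivity
  rw [coe_fib_eq]
  field_simp
  linear_combination (-ψ ^ n) * goldenRatio_add_goldenConj

theorem abs_fib_add_one_sub_goldenRatio_div_sqrt_five_mul_le (n : ℕ) :
    |(Nat.fib (n + 1) : ℝ) - φ / √5 * (φ ^ n + ψ ^ n)| ≤ 1 := by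
  have hψ : |ψ| ≤ 1 :=
    abs_le.2 ⟨neg_one_lt_goldenConj.le, goldenConj_neg.le.trans zero_le_one⟩
  have h5 : 1 ≤ √5 := Real.one_le_sqrt.2 (by norm_num)
  rw [fib_add_one_sub_goldenRatio_div_sqrt_five_mul, abs_neg, abs_div, abs_pow,
    abs_of_pos (by positivity : (0 : ℝ) < √5)]
  exact div_le_one_of_le₀ ((pow_le_one₀ (abs_nonneg _) hψ).trans h5) (by positivity)

theorem goldenRatio_div_sqrt_five : φ / √5 = (5 + √5) / 10 := by
  have h5 : √5 ≠ 0 := by positivity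
  rw [goldenRatio]
  field_simp
  linear_combination (-2 : ℝ) * Real.mul_self_sqrt (show (0 : ℝ) ≤ 5 by norm_num)

end Asymptotics

/-- The average eccentricity of Λ_n, divided by n, converges to (5+√5)/10. -/
theorem avg_ecc_lucasCube_tendsto :
    Filter.Tendsto
      (fun n : ℕ =>
        ((∑ u : LucasV n, gecc (lucasCube n) u : ℕ) : ℝ) / (Fintype.card (LucasV n)) / n)
      Filter.atTop (nhds ((5 + Real.sqrt 5) / 10)) := by
  rw [← goldenRatio_div_sqrt_five]
  refine tendsto_iff_norm_sub_tendsto_zero.2 <| squeeze_zero'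
    (Filter.Eventually.of_forall fun _ => norm_nonneg _) ?_
    (tendsto_const_div_atTop_nhds_zero_nat 2)
  filter_upwards [Filter.eventually_ge_atTop 2] with n hn
  rw [Real.norm_eq_abs]
  have : NeZero n := ⟨by omega⟩
  have hcard : (Fintype.card (LucasV n) : ℝ) = Nat.fib (n + 1) + Nat.fib (n - 1) := by
    exact_mod_cast card_lucasV hn
  refine abs_div_div_sub_le (by positivity) ?_ (abs_sum_gecc_lucasCube_sub_le hn) ?_
  · have := Nat.le_fib_add_one (n + 1)
    exact_mod_cast (show n ≤ Fintype.card (LucasV n) by rw [card_lucasV hn]; omega)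
  · rw [hcard, fib_add_one_add_fib_sub_one (by omega)]
    exact abs_fib_add_one_sub_goldenRatio_div_sqrt_five_mul_le n
end

section
/- (Density Lemma) If G is a subgraph of a hypercube Q_n, then |E(G)| ≤ (1/2)|V(G)|·log₂|V(G)|, with equality if and only if G is (isomorphic to) a hypercube. -/
open Finset

/-- The hypercube Q_n: binary strings of length n, adjacent iff they differ in one position. -/
def hyperCube (n : ℕ) : SimpleGraph (Fin n → Bool) where
  Adj u v := diffCount u v = 1
  symm := by
    constructor
    intro u v h
    have he : (Finset.univ.filter fun i => v i ≠ u i)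
        = (Finset.univ.filter fun i => u i ≠ v i) := by
      apply Finset.filter_congr; intro i _; exact ne_comm
    simpa [diffCount, he] using h
  loopless := by constructor; intro u h; simp [diffCount] at h

instance (n : ℕ) : DecidableRel (hyperCube n).Adj := fun u v => Nat.decEq _ _

open Real SimpleGraph

/-!
Split `S ⊆ {0,1}^(n+1)` by the last coordinate into slices `S₀, S₁ ⊆ {0,1}^n`. The edges
induced by `S` are those inside each slice together with a matching of size
`|S₀ ∩ S₁| ≤ min |S₀| |S₁|` between them, so by induction on `n` it suffices that
`a log a + b log b + 2 min(a, b) log 2 ≤ (a + b) log (a + b)`, which holds because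
`x ↦ (a + x) log (a + x) - x log x` is increasing. Equality forces either one slice to be empty
or `S₀ = S₁`, with the slices themselves extremal, so inductively the extremal sets are images
of embedded hypercubes. A subgraph of `Q_n` has at most as many edges as the subgraph its vertices
induce, with equality only if it is that induced subgraph.
-/

lemma Real.strictMonoOn_add_mul_log_add_sub_mul_log {a : ℝ} (ha : 0 < a) :
    StrictMonoOn (fun x => (a + x) * log (a + x) - x * log x) (Set.Ici 0) := by
  refine strictMonoOn_of_deriv_pos (convex_Ici 0)
    ((continuous_mul_log.comp (continuous_const_add a)).sub continuous_mul_log).continuousOn ?_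
  intro x hx
  rw [interior_Ici, Set.mem_Ioi] at hx
  have hderiv : HasDerivAt (fun x => (a + x) * log (a + x) - x * log x)
      (log (a + x) + 1 - (log x + 1)) x :=
    ((hasDerivAt_mul_log (by linarith)).comp_const_add a x).sub (hasDerivAt_mul_log hx.ne')
  rw [hderiv.deriv, add_sub_add_right_eq_sub, sub_pos]
  exact log_lt_log hx (by linarith)

lemma Real.add_self_mul_log_add_self (a : ℝ) :
    (a + a) * log (a + a) = 2 * a * log 2 + 2 * a * log a := by
  rcases eq_or_ne a 0 with rfl | ha
  · simp
  rw [← two_mul, log_mul two_ne_zero ha]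
  ring

lemma Real.mul_log_add_mul_log_add_two_mul_min_mul_log_two_le {a b : ℝ} (ha : 0 ≤ a)
    (hb : 0 ≤ b) :
    a * log a + b * log b + 2 * min a b * log 2 ≤ (a + b) * log (a + b) := by
  wlog hab : a ≤ b generalizing a b
  · have := this hb ha (le_of_not_ge hab)
    rwa [min_comm, add_comm b a, add_comm (b * log b)] at this
  rcases ha.eq_or_lt with rfl | ha
  · simp [hb]
  have hmono := (strictMonoOn_add_mul_log_add_sub_mul_log ha).monotoneOn ha.le hb hab
  simp only [add_self_mul_log_add_self] at hmono
  rw [min_eq_left hab]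
  linarith

lemma Real.mul_log_add_mul_log_add_two_mul_min_mul_log_two_lt {a b : ℝ} (ha : 0 < a) (hb : 0 < b)
    (hab : a ≠ b) :
    a * log a + b * log b + 2 * min a b * log 2 < (a + b) * log (a + b) := by
  wlog hlt : a < b generalizing a b
  · have := this hb ha hab.symm (hab.lt_or_gt.resolve_left hlt)
    rwa [min_comm, add_comm b a, add_comm (b * log b)] at this
  have hmono := strictMonoOn_add_mul_log_add_sub_mul_log ha ha.le hb.le hlt
  simp only [add_self_mul_log_add_self] at hmono
  rw [min_eq_left hlt.le]
  linarith

lemma Real.half_mul_mul_logb_two (x : ℝ) : 1 / 2 * x * logb 2 x = x * log x / (2 * log 2) := by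
  rw [logb]
  ring

lemma SimpleGraph.Embedding.nonempty_iso_of_range_eq {V₁ V₂ W : Type*} {G₁ : SimpleGraph V₁}
    {G₂ : SimpleGraph V₂} {G : SimpleGraph W} (e₁ : G₁ ↪g G) (e₂ : G₂ ↪g G)
    (h : Set.range e₁ = Set.range e₂) : Nonempty (G₁ ≃g G₂) := by
  have iso₁ := e₁.isoInduceRange
  rw [h] at iso₁
  exact ⟨iso₁.trans e₂.isoInduceRange.symm⟩

lemma diffCount_eq_zero {n : ℕ} {u v : Fin n → Bool} : diffCount u v = 0 ↔ u = v := by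
  simp [diffCount, funext_iff]

lemma diffCount_snoc {n : ℕ} (x y : Fin n → Bool) (a b : Bool) :
    diffCount (Fin.snoc x a : Fin (n + 1) → Bool) (Fin.snoc y b) =
      diffCount x y + if a = b then 0 else 1 := by
  simp only [diffCount, card_filter, Fin.sum_univ_castSucc, Fin.snoc_castSucc, Fin.snoc_last]
  congr 1
  by_cases h : a = b <;> simp [h]

namespace hyperCube

variable {n : ℕ}

lemma adj_snoc {x y : Fin n → Bool} {a b : Bool} :
    (hyperCube (n + 1)).Adj (Fin.snoc x a) (Fin.snoc y b) ↔
      (hyperCube n).Adj x y ∧ a = b ∨ x = y ∧ a ≠ b := by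
  change diffCount _ _ = 1 ↔ diffCount x y = 1 ∧ a = b ∨ x = y ∧ a ≠ b
  rw [diffCount_snoc, ← diffCount_eq_zero]
  by_cases h : a = b <;> simp [h]

def adjCount (S : Finset (Fin n → Bool)) : ℕ :=
  ∑ u ∈ S, ∑ v ∈ S, if (hyperCube n).Adj u v then 1 else 0

def slice (S : Finset (Fin (n + 1) → Bool)) (b : Bool) : Finset (Fin n → Bool) :=
  {x | Fin.snoc x b ∈ S}

@[simp]
lemma mem_slice {S : Finset (Fin (n + 1) → Bool)} {b : Bool} {x : Fin n → Bool} :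
    x ∈ slice S b ↔ Fin.snoc x b ∈ S := by
  simp [slice]

lemma sum_eq_sum_slice {M : Type*} [AddCommMonoid M] (S : Finset (Fin (n + 1) → Bool))
    (g : (Fin (n + 1) → Bool) → M) :
    ∑ v ∈ S, g v = ∑ b, ∑ x ∈ slice S b, g (Fin.snoc x b) := by
  conv_lhs => rw [← univ_inter S, ← sum_ite_mem, ← (Fin.snocEquiv fun _ => Bool).sum_comp,
    Fintype.sum_prod_type]
  simp only [slice, sum_filter]
  rfl

lemma card_eq_card_slice_add (S : Finset (Fin (n + 1) → Bool)) :
    #S = #(slice S false) + #(slice S true) := by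
  rw [card_eq_sum_ones, sum_eq_sum_slice, Fintype.sum_bool, add_comm, card_eq_sum_ones,
    card_eq_sum_ones]

lemma adjCount_eq_adjCount_slice_add (S : Finset (Fin (n + 1) → Bool)) :
    adjCount S = adjCount (slice S false) + adjCount (slice S true) +
      2 * #(slice S false ∩ slice S true) := by
  have hcross (A B : Finset (Fin n → Bool)) :
      ∑ x ∈ A, ∑ y ∈ B, (if x = y then 1 else 0) = #(A ∩ B) := by
    simp [sum_ite_eq]
  simp only [adjCount, sum_eq_sum_slice S, Fintype.sum_bool, adj_snoc]
  simp only [and_true, and_false, or_false, false_or, ne_eq, not_true_eq_false,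
    Bool.true_eq_false, Bool.false_eq_true, not_false_eq_true, sum_add_distrib, hcross,
    inter_comm (slice S true)]
  ring

@[simp]
lemma adjCount_empty : adjCount (∅ : Finset (Fin n → Bool)) = 0 := rfl

lemma adjCount_of_slice_eq_empty {S : Finset (Fin (n + 1) → Bool)} {b : Bool}
    (h : slice S b = ∅) : adjCount S = adjCount (slice S !b) := by
  cases b <;> simp_all [adjCount_eq_adjCount_slice_add]

lemma card_of_slice_eq_empty {S : Finset (Fin (n + 1) → Bool)} {b : Bool}
    (h : slice S b = ∅) : #S = #(slice S !b) := by
  cases b <;> simp_all [card_eq_card_slice_add]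

lemma image_snoc_slice_of_slice_eq_empty {S : Finset (Fin (n + 1) → Bool)} {b : Bool}
    (h : slice S b = ∅) :
    (Fin.snoc · (!b)) '' (slice S !b : Set (Fin n → Bool)) =
      (S : Set (Fin (n + 1) → Bool)) := by
  ext v
  refine ⟨by rintro ⟨x, hx, rfl⟩; exact mem_slice.1 hx, fun hv => ⟨Fin.init v, ?_⟩⟩
  have hlast : v (Fin.last n) = !b := by
    by_contra hne
    have : Fin.init v ∈ slice S b := by
      rw [mem_slice, ← (by simpa using hne : v (Fin.last n) = b), Fin.snoc_init_self]
      exact hv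
    simp [h] at this
  refine ⟨?_, by simp only [← hlast, Fin.snoc_init_self]⟩
  rw [mem_coe, mem_slice, ← hlast, Fin.snoc_init_self]
  exact hv

lemma adjCount_eq_zero_of_dim_zero (S : Finset (Fin 0 → Bool)) : adjCount S = 0 :=
  sum_eq_zero fun u _ => sum_eq_zero fun v _ =>
    if_neg (Subsingleton.elim u v ▸ (hyperCube 0).irrefl)

lemma adjCount_univ (m : ℕ) : adjCount (univ : Finset (Fin m → Bool)) = m * 2 ^ m := by
  induction m with
  | zero => exact adjCount_eq_zero_of_dim_zero _
  | succ m ih =>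
    have hslice (b : Bool) : slice (univ : Finset (Fin (m + 1) → Bool)) b = univ := by
      ext; simp
    rw [adjCount_eq_adjCount_slice_add, hslice, hslice, ih, inter_self, card_univ,
      Fintype.card_fun, Fintype.card_bool, Fintype.card_fin]
    ring

def snocEmbedding (b : Bool) : hyperCube n ↪g hyperCube (n + 1) where
  toFun x := Fin.snoc x b
  inj' := Fin.snoc_left_injective (α := fun _ => Bool) b
  map_rel_iff' := by simp [adj_snoc]

def snocMap {m : ℕ} (ψ : hyperCube m ↪g hyperCube n) :
    hyperCube (m + 1) ↪g hyperCube (n + 1) where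
  toFun w := Fin.snoc (ψ (Fin.init w)) (w (Fin.last m))
  inj' := fun ⦃v w⦄ h => by
    have hinit : ψ (Fin.init v) = ψ (Fin.init w) := by simpa using congrArg Fin.init h
    have hlast : v (Fin.last m) = w (Fin.last m) := by simpa using congrFun h (Fin.last n)
    rw [← Fin.snoc_init_self v, ← Fin.snoc_init_self w, ψ.injective hinit, hlast]
  map_rel_iff' {v w} := by
    change (hyperCube (n + 1)).Adj (Fin.snoc _ _) (Fin.snoc _ _) ↔ _
    conv_rhs => rw [← Fin.snoc_init_self v, ← Fin.snoc_init_self w]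
    simp only [adj_snoc, ψ.map_adj_iff, ψ.injective.eq_iff]

@[simp]
lemma snocMap_apply {m : ℕ} (ψ : hyperCube m ↪g hyperCube n) (w : Fin (m + 1) → Bool) :
    snocMap ψ w = Fin.snoc (ψ (Fin.init w)) (w (Fin.last m)) :=
  rfl

lemma range_snocMap_of_slice_eq {m : ℕ} {ψ : hyperCube m ↪g hyperCube n}
    {S : Finset (Fin (n + 1) → Bool)} (hψ : Set.range ψ = slice S false)
    (hS : slice S false = slice S true) : Set.range (snocMap ψ) = S := by
  ext v
  have hinit : Fin.init v ∈ Set.range ψ ↔ v ∈ S := by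
    rw [hψ, mem_coe, ← mem_slice.trans (by rw [Fin.snoc_init_self] : _ ↔ v ∈ S)]
    cases v (Fin.last n) <;> simp [hS]
  refine ⟨?_, fun hv => ?_⟩
  · rintro ⟨w, rfl⟩
    exact hinit.1 ⟨Fin.init w, by simp⟩
  · obtain ⟨x, hx⟩ := hinit.2 hv
    exact ⟨Fin.snoc x (v (Fin.last n)), by simp [hx]⟩

lemma card_inter_slice_mul_log_two_le (S : Finset (Fin (n + 1) → Bool)) :
    (#(slice S false ∩ slice S true) : ℝ) * log 2 ≤
      min (#(slice S false) : ℝ) #(slice S true) * log 2 := by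
  gcongr
  exact_mod_cast le_min (card_le_card inter_subset_left) (card_le_card inter_subset_right)

theorem adjCount_mul_log_two_le :
    ∀ {n : ℕ} (S : Finset (Fin n → Bool)), (adjCount S : ℝ) * log 2 ≤ #S * log #S
  | 0, S => by
    simpa [adjCount_eq_zero_of_dim_zero] using
      mul_nonneg (Nat.cast_nonneg #S) (log_natCast_nonneg #S)
  | n + 1, S => by
    have h0 := adjCount_mul_log_two_le (slice S false)
    have h1 := adjCount_mul_log_two_le (slice S true)
    have hinter := card_inter_slice_mul_log_two_le S
    have key := mul_log_add_mul_log_add_two_mul_min_mul_log_two_le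
      (Nat.cast_nonneg (α := ℝ) #(slice S false)) (Nat.cast_nonneg #(slice S true))
    rw [adjCount_eq_adjCount_slice_add, card_eq_card_slice_add]
    push_cast
    linarith

lemma slice_eq_of_adjCount_mul_log_two_eq {S : Finset (Fin (n + 1) → Bool)}
    (h0 : (slice S false).Nonempty) (h1 : (slice S true).Nonempty)
    (heq : (adjCount S : ℝ) * log 2 = #S * log #S) :
    slice S false = slice S true ∧
      (adjCount (slice S false) : ℝ) * log 2 = #(slice S false) * log #(slice S false) := by
  have hinter := card_inter_slice_mul_log_two_le S
  have key := mul_log_add_mul_log_add_two_mul_min_mul_log_two_le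
    (Nat.cast_nonneg (α := ℝ) #(slice S false)) (Nat.cast_nonneg #(slice S true))
  rw [adjCount_eq_adjCount_slice_add, card_eq_card_slice_add] at heq
  push_cast at heq
  set A := slice S false
  set B := slice S true
  have hA := adjCount_mul_log_two_le A
  have hB := adjCount_mul_log_two_le B
  have hcard : #A = #B := by
    by_contra hne
    have := mul_log_add_mul_log_add_two_mul_min_mul_log_two_lt (Nat.cast_pos.2 h0.card_pos)
      (Nat.cast_pos.2 h1.card_pos) (Nat.cast_injective.ne hne)
    linarith
  rw [← hcard, min_self] at hinter key
  rw [← hcard] at hB heq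
  have hAB : A ⊆ B := by
    refine inter_eq_left.1 (eq_of_subset_of_card_le inter_subset_left ?_)
    have : (#A : ℝ) * log 2 ≤ #(A ∩ B) * log 2 := by linarith
    exact_mod_cast le_of_mul_le_mul_right this (log_pos one_lt_two)
  exact ⟨eq_of_subset_of_card_le hAB hcard.ge, by linarith⟩

theorem exists_embedding_range_eq_of_adjCount_mul_log_two_eq :
    ∀ {n : ℕ} (S : Finset (Fin n → Bool)), S.Nonempty →
      (adjCount S : ℝ) * log 2 = #S * log #S →
      ∃ m, ∃ ψ : hyperCube m ↪g hyperCube n, Set.range ψ = S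
  | 0, S, hS, _ =>
    ⟨0, .refl, by rw [hS.eq_univ, coe_univ]; exact Set.range_eq_univ.2 fun x => ⟨x, rfl⟩⟩
  | n + 1, S, hS, heq => by
    by_cases hdeg : ∃ b, slice S b = ∅
    · obtain ⟨b, hb⟩ := hdeg
      rw [adjCount_of_slice_eq_empty hb, card_of_slice_eq_empty hb] at heq
      have hne : (slice S !b).Nonempty := by
        rw [← card_pos, ← card_of_slice_eq_empty hb]
        exact hS.card_pos
      obtain ⟨m, ψ, hψ⟩ := exists_embedding_range_eq_of_adjCount_mul_log_two_eq _ hne heq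
      refine ⟨m, (snocEmbedding !b).comp ψ, ?_⟩
      rw [SimpleGraph.Embedding.coe_comp, Set.range_comp, hψ]
      exact image_snoc_slice_of_slice_eq_empty hb
    · have hne (b : Bool) : (slice S b).Nonempty :=
        nonempty_iff_ne_empty.2 fun h => hdeg ⟨b, h⟩
      obtain ⟨hslice, heq⟩ := slice_eq_of_adjCount_mul_log_two_eq (hne false) (hne true) heq
      obtain ⟨m, ψ, hψ⟩ :=
        exists_embedding_range_eq_of_adjCount_mul_log_two_eq _ (hne false) heq
      exact ⟨m + 1, snocMap ψ, range_snocMap_of_slice_eq hψ hslice⟩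

section Subgraph

variable {V : Type*} [Fintype V] {G : SimpleGraph V} [DecidableRel G.Adj]

lemma two_mul_card_edgeFinset_eq_adjCount (e : G ↪g hyperCube n) :
    2 * #G.edgeFinset = adjCount (univ.map e.toEmbedding) := by
  rw [← sum_degrees_eq_twice_card_edges, adjCount, sum_map]
  refine sum_congr rfl fun v _ => ?_
  rw [← card_neighborFinset_eq_degree, neighborFinset_eq_filter, card_filter, sum_map]
  simp

lemma two_mul_card_edgeFinset_le_adjCount (f : G →g hyperCube n) (hf : Function.Injective f) :
    2 * #G.edgeFinset ≤ adjCount (univ.map ⟨f, hf⟩) := by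
  classical
  calc 2 * #G.edgeFinset ≤ 2 * #((hyperCube n).comap f).edgeFinset := by
        gcongr
        exact f.le_comap
    _ = adjCount (univ.map ⟨f, hf⟩) :=
        two_mul_card_edgeFinset_eq_adjCount (Embedding.comap ⟨f, hf⟩ (hyperCube n))

lemma exists_embedding_of_two_mul_card_edgeFinset_eq (f : G →g hyperCube n)
    (hf : Function.Injective f) (h : 2 * #G.edgeFinset = adjCount (univ.map ⟨f, hf⟩)) :
    ∃ F : G ↪g hyperCube n, ⇑F = f := by
  classical
  have hcomap : 2 * #((hyperCube n).comap f).edgeFinset = adjCount (univ.map ⟨f, hf⟩) :=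
    two_mul_card_edgeFinset_eq_adjCount (Embedding.comap ⟨f, hf⟩ (hyperCube n))
  have hG : G = (hyperCube n).comap f := edgeFinset_inj.1 <|
    eq_of_subset_of_card_le (edgeFinset_subset_edgeFinset.2 f.le_comap) (by omega)
  exact ⟨⟨⟨f, hf⟩, fun {u v} => (iff_of_eq (congrArg (·.Adj u v) hG)).symm⟩, rfl⟩

lemma card_edgeFinset_mul_two_mul_log_two (m : ℕ) :
    (#(hyperCube m).edgeFinset : ℝ) * (2 * log 2) =
      Fintype.card (Fin m → Bool) * log (Fintype.card (Fin m → Bool)) := by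
  have h := two_mul_card_edgeFinset_eq_adjCount (Embedding.refl (G := hyperCube m))
  rw [show (Embedding.refl : hyperCube m ↪g _).toEmbedding = .refl _ from rfl, map_refl,
    adjCount_univ] at h
  have h' : (2 * #(hyperCube m).edgeFinset : ℝ) = m * 2 ^ m := by exact_mod_cast h
  simp only [Fintype.card_fun, Fintype.card_bool, Fintype.card_fin, Nat.cast_pow, Nat.cast_ofNat,
    log_pow]
  linear_combination log 2 * h'

end Subgraph

end hyperCube

theorem density_lemma_general {V : Type*} [Fintype V] [Nonempty V]
    (G : SimpleGraph V) [DecidableRel G.Adj] (n : ℕ)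
    (f : G →g hyperCube n) (hf : Function.Injective f) :
    ((G.edgeFinset.card : ℝ) ≤
        (1 / 2) * (Fintype.card V) * Real.logb 2 (Fintype.card V)) ∧
      ((G.edgeFinset.card : ℝ) =
          (1 / 2) * (Fintype.card V) * Real.logb 2 (Fintype.card V) ↔
        ∃ m : ℕ, Nonempty (G ≃g hyperCube m)) := by
  have hbound := hyperCube.adjCount_mul_log_two_le (univ.map ⟨f, hf⟩)
  have hle := hyperCube.two_mul_card_edgeFinset_le_adjCount f hf
  rw [card_map, card_univ] at hbound
  have hlog : (0 : ℝ) < 2 * log 2 := by positivity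
  simp only [half_mul_mul_logb_two, le_div_iff₀ hlog, eq_div_iff hlog.ne']
  have hle' : (#G.edgeFinset : ℝ) * (2 * log 2) ≤
      hyperCube.adjCount (univ.map ⟨f, hf⟩) * log 2 := by
    rw [← mul_assoc, mul_comm _ (2 : ℝ)]
    gcongr
    exact_mod_cast hle
  refine ⟨hle'.trans hbound, fun heq => ?_, fun ⟨m, ⟨φ⟩⟩ => ?_⟩
  · have hcount : 2 * #G.edgeFinset = hyperCube.adjCount (univ.map ⟨f, hf⟩) := by
      refine le_antisymm hle <|
        Nat.cast_le.1 (le_of_mul_le_mul_right (α := ℝ) ?_ (log_pos one_lt_two))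
      push_cast
      linarith
    obtain ⟨F, hF⟩ := hyperCube.exists_embedding_of_two_mul_card_edgeFinset_eq f hf hcount
    obtain ⟨m, ψ, hψ⟩ :=
      hyperCube.exists_embedding_range_eq_of_adjCount_mul_log_two_eq (univ.map ⟨f, hf⟩)
        univ_nonempty.map (by rw [card_map, card_univ]; linarith)
    exact ⟨m, F.nonempty_iso_of_range_eq ψ (by rw [hψ, hF]; simp)⟩
  · rw [φ.card_edgeFinset_eq, Fintype.card_congr φ.toEquiv]
    exact hyperCube.card_edgeFinset_mul_two_mul_log_two m

/-- Density Lemma: a (nonempty) subgraph G of a hypercube satisfies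
|E(G)| ≤ (1/2)|V(G)| log₂ |V(G)|, with equality iff G is a hypercube. -/
theorem density_lemma {V : Type*} [Fintype V] [DecidableEq V] [Nonempty V]
    (G : SimpleGraph V) [DecidableRel G.Adj] (n : ℕ)
    (f : G →g hyperCube n) (hf : Function.Injective f) :
    ((G.edgeFinset.card : ℝ) ≤
        (1 / 2) * (Fintype.card V) * Real.logb 2 (Fintype.card V)) ∧
      ((G.edgeFinset.card : ℝ) =
          (1 / 2) * (Fintype.card V) * Real.logb 2 (Fintype.card V) ↔
        ∃ m : ℕ, Nonempty (G ≃g hyperCube m)) :=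
  density_lemma_general G n f hf
end
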